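/- arXiv:2005.05364 — 2 statements merged into one kernel-verified Lean document; each statement's English description precedes it below -/
import Mathlib

section
/- Under the LOB pricing structure and Assumption 2, for every fixed price vector (q, q̄_1, ..., q̄_n) ∈ Q̂ := {(q,q̄) ∈ (0,1] × (0,1]^n : q < q̄_i for all i}, there exists a unique Nash equilibrium liquidation vector s̄(q, q̄_1,...,q̄_n) ∈ D of problem (P2), i.e., a unique s̄ ∈ D such that s̄_i is an optimal solution of bank i's problem (P2) given s̄_{-i} for every i. -/
noncomputable section

/-- The domain `D = ∏ [0, aᵢ]` of admissible liquidation vectors. -/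
def memD (n : ℕ) (a s : Fin n → ℝ) : Prop := ∀ i, s i ∈ Set.Icc 0 (a i)

/-- Bank `i`'s cost: realized loss from sales plus interest on the borrowed amount. -/
def obj (n : ℕ) (r : ℝ) (h : Fin n → ℝ) (fbar : Fin n → (Fin n → ℝ) → ℝ)
    (i : Fin n) (s : Fin n → ℝ) : ℝ :=
  s i * (1 - fbar i s) + r * (h i - s i * fbar i s)

/-- Feasibility in problem (P2) with fixed prices `(q, q̄)`. -/
def feasP2 (n : ℕ) (a h : Fin n → ℝ) (q : ℝ) (qb : Fin n → ℝ) (i : Fin n) (x : ℝ) : Prop :=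
  x ∈ Set.Icc 0 (a i) ∧ x ≤ h i / qb i ∧ (h i - a i * q) / (qb i - q) ≤ x

/-- `s` is a Nash equilibrium of problem (P2) at fixed prices `(q, q̄)`. -/
def NashP2 (n : ℕ) (a h : Fin n → ℝ) (r q : ℝ) (qb : Fin n → ℝ)
    (fbar : Fin n → (Fin n → ℝ) → ℝ) (s : Fin n → ℝ) : Prop :=
  ∀ i : Fin n,
    (h i ≤ a i * qb i →
      feasP2 n a h q qb i (s i) ∧
      ∀ x : ℝ, feasP2 n a h q qb i x →
        obj n r h fbar i s ≤ obj n r h fbar i (Function.update s i x)) ∧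
    (a i * qb i < h i → s i = a i)

/-- Limit order book based price: all banks submit orders at the same rate, so when bank `i`
has sold `u` units the total volume sold is `∑ⱼ min(sⱼ, u)`.  The average price obtained by
bank `i` is `(1/sᵢ) ∫₀^{sᵢ} f(∑ⱼ min(sⱼ,u)) du`, which coincides with the order-statistics
formula of the LOB pricing scheme. -/
def lob (n : ℕ) (f : ℝ → ℝ) : Fin n → (Fin n → ℝ) → ℝ := fun i s =>
  if s i = 0 then 1 else (∫ u in (0:ℝ)..(s i), f (∑ j, min (s j) u)) / s i

/-- Assumption 2 on the order book density `f : [0,M] → (0,1]`. -/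
structure Assumption2 (M : ℝ) (f : ℝ → ℝ) : Prop where
  mem : ∀ x ∈ Set.Icc (0 : ℝ) M, f x ∈ Set.Ioc (0 : ℝ) 1
  anti : StrictAntiOn f (Set.Icc 0 M)
  smooth : ContDiffOn ℝ 2 f (Set.Icc 0 M)
  f_zero : f 0 = 1
  deriv_mono : MonotoneOn (derivWithin f (Set.Icc 0 M)) (Set.Icc 0 M)

/-!
With the other banks fixed, bank `i`'s cost of selling `x` is
`r hᵢ + x - (1 + r) ∫₀ˣ f(V u) du`, where `V u` is the volume on the book once bank `i` has sold
`u`. As `f ∘ V` decreases, the cost is convex in `x`, so `sᵢ` is a best response on the feasible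
interval `[Lᵢ, Uᵢ]` iff the marginal benefit `(1 + r) f(V sᵢ)` is at most `1` unless `sᵢ = Uᵢ` and
at least `1` unless `sᵢ = Lᵢ`. Clamping a common threshold `t` to every `[Lⱼ, Uⱼ]` gives an
equilibrium once `(1 + r) f(∑ⱼ min(Uⱼ, t)) = 1`, which the intermediate value theorem provides.
For uniqueness, if `s'ᵢ < sᵢ` then these conditions force `s' ≤ s` componentwise, so less volume is
sold under `s'` when bank `i` stops than under `s`, against the conditions at `i` and the strict
monotonicity of `f`.
-/

open Set Filter Topology

namespace AntitoneOn

variable {g : ℝ → ℝ} {x y : ℝ}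

theorem intervalIntegral_le_sub_mul (hg : AntitoneOn g (Icc y x)) (hyx : y ≤ x) :
    ∫ u in y..x, g u ≤ (x - y) * g y := by
  have hint : IntervalIntegrable g MeasureTheory.volume y x :=
    (hg.mono (by rw [uIcc_of_le hyx])).intervalIntegrable
  simpa [mul_comm] using intervalIntegral.integral_mono_on hyx hint intervalIntegrable_const
    fun u hu => hg ⟨le_rfl, hyx⟩ hu hu.1

theorem sub_mul_le_intervalIntegral (hg : AntitoneOn g (Icc y x)) (hyx : y ≤ x) :
    (x - y) * g x ≤ ∫ u in y..x, g u := by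
  have hint : IntervalIntegrable g MeasureTheory.volume y x :=
    (hg.mono (by rw [uIcc_of_le hyx])).intervalIntegrable
  simpa [mul_comm] using intervalIntegral.integral_mono_on hyx intervalIntegrable_const hint
    fun u hu => hg hu ⟨hyx, le_rfl⟩ hu.2

end AntitoneOn

section FirstOrderCondition

variable {g : ℝ → ℝ} {c L U x y : ℝ}

theorem sub_mul_integral_sub_sub_mul_integral (hg : AntitoneOn g (Icc 0 U))
    (hy : y ∈ Icc 0 U) (hx : x ∈ Icc 0 U) :
    (x - c * ∫ u in (0:ℝ)..x, g u) - (y - c * ∫ u in (0:ℝ)..y, g u)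
      = (x - y) - c * ∫ u in y..x, g u := by
  have hint : ∀ z ∈ Icc 0 U, IntervalIntegrable g MeasureTheory.volume 0 z := fun z hz =>
    (hg.mono (by rw [uIcc_of_le hz.1]; exact Icc_subset_Icc_right hz.2)).intervalIntegrable
  rw [← intervalIntegral.integral_interval_sub_left (hint x hx) (hint y hy)]
  ring

theorem mul_le_one_of_isMinOn_sub_mul_integral (hc : 0 ≤ c) (hg : AntitoneOn g (Icc 0 U))
    (hL : 0 ≤ L) (hy : y ∈ Icc L U) (hgc : ContinuousOn g (Icc 0 U))
    (hmin : IsMinOn (fun x => x - c * ∫ u in (0:ℝ)..x, g u) (Icc L U) y) (hyU : y < U) :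
    c * g y ≤ 1 := by
  have hbound : ∀ x ∈ Ioc y U, c * g x ≤ 1 := by
    intro x hx
    have hdiff := sub_mul_integral_sub_sub_mul_integral (c := c) hg
      ⟨hL.trans hy.1, hy.2⟩ ⟨hL.trans (hy.1.trans hx.1.le), hx.2⟩
    have hopt := isMinOn_iff.mp hmin x ⟨hy.1.trans hx.1.le, hx.2⟩
    have hint := (hg.mono (Icc_subset_Icc (hL.trans hy.1) hx.2)).sub_mul_le_intervalIntegral hx.1.le
    have hpos : 0 < x - y := sub_pos.mpr hx.1
    nlinarith [mul_le_mul_of_nonneg_left hint hc]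
  have hcont : Tendsto (fun x => c * g x) (𝓝[Ioc y U] y) (𝓝 (c * g y)) :=
    (((hgc y ⟨hL.trans hy.1, hy.2⟩).mono
      fun x hx => ⟨hL.trans (hy.1.trans hx.1.le), hx.2⟩).const_mul c)
  have := left_nhdsWithin_Ioc_neBot hyU
  exact le_of_tendsto hcont (eventually_nhdsWithin_of_forall hbound)

theorem one_le_mul_of_isMinOn_sub_mul_integral (hc : 0 ≤ c) (hg : AntitoneOn g (Icc 0 U))
    (hL : 0 ≤ L) (hy : y ∈ Icc L U) (hgc : ContinuousOn g (Icc 0 U))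
    (hmin : IsMinOn (fun x => x - c * ∫ u in (0:ℝ)..x, g u) (Icc L U) y) (hLy : L < y) :
    1 ≤ c * g y := by
  have hbound : ∀ x ∈ Ico L y, 1 ≤ c * g x := by
    intro x hx
    have hdiff := sub_mul_integral_sub_sub_mul_integral (c := c) hg
      ⟨hL.trans hx.1, hx.2.le.trans hy.2⟩ ⟨hL.trans hy.1, hy.2⟩
    have hopt := isMinOn_iff.mp hmin x ⟨hx.1, hx.2.le.trans hy.2⟩
    have hint := (hg.mono (Icc_subset_Icc (hL.trans hx.1) hy.2)).intervalIntegral_le_sub_mul hx.2.le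
    have hpos : 0 < y - x := sub_pos.mpr hx.2
    nlinarith [mul_le_mul_of_nonneg_left hint hc]
  have hcont : Tendsto (fun x => c * g x) (𝓝[Ico L y] y) (𝓝 (c * g y)) :=
    (((hgc y ⟨hL.trans hy.1, hy.2⟩).mono
      fun x hx => ⟨hL.trans hx.1, hx.2.le.trans hy.2⟩).const_mul c)
  have := right_nhdsWithin_Ico_neBot hLy
  exact ge_of_tendsto hcont (eventually_nhdsWithin_of_forall hbound)

theorem isMinOn_sub_mul_integral_of_mul_le_one_of_one_le_mul (hc : 0 ≤ c)
    (hg : AntitoneOn g (Icc 0 U)) (hL : 0 ≤ L) (hy : y ∈ Icc L U)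
    (habove : y < U → c * g y ≤ 1) (hbelow : L < y → 1 ≤ c * g y) :
    IsMinOn (fun x => x - c * ∫ u in (0:ℝ)..x, g u) (Icc L U) y := by
  refine isMinOn_iff.mpr fun x hx => ?_
  have hy0 : y ∈ Icc 0 U := ⟨hL.trans hy.1, hy.2⟩
  have hx0 : x ∈ Icc 0 U := ⟨hL.trans hx.1, hx.2⟩
  rcases lt_trichotomy y x with hyx | rfl | hxy
  · have hdiff := sub_mul_integral_sub_sub_mul_integral (c := c) hg hy0 hx0
    have hint := (hg.mono (Icc_subset_Icc hy0.1 hx.2)).intervalIntegral_le_sub_mul hyx.le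
    nlinarith [mul_le_mul_of_nonneg_left hint hc, habove (hyx.trans_le hx.2)]
  · exact le_rfl
  · have hdiff := sub_mul_integral_sub_sub_mul_integral (c := c) hg hx0 hy0
    have hint := (hg.mono (Icc_subset_Icc hx0.1 hy.2)).sub_mul_le_intervalIntegral hxy.le
    nlinarith [mul_le_mul_of_nonneg_left hint hc, hbelow (hx.1.trans_lt hxy)]

theorem isMinOn_sub_mul_integral_iff (hc : 0 ≤ c) (hg : AntitoneOn g (Icc 0 U)) (hL : 0 ≤ L)
    (hy : y ∈ Icc L U) (hgc : ContinuousOn g (Icc 0 U)) :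
    IsMinOn (fun x => x - c * ∫ u in (0:ℝ)..x, g u) (Icc L U) y ↔
      (y < U → c * g y ≤ 1) ∧ (L < y → 1 ≤ c * g y) :=
  ⟨fun hmin => ⟨mul_le_one_of_isMinOn_sub_mul_integral hc hg hL hy hgc hmin,
      one_le_mul_of_isMinOn_sub_mul_integral hc hg hL hy hgc hmin⟩,
    fun h => isMinOn_sub_mul_integral_of_mul_le_one_of_one_le_mul hc hg hL hy h.1 h.2⟩

end FirstOrderCondition

section SoldVolume

variable {n : ℕ}

def soldVolume (s : Fin n → ℝ) (u : ℝ) : ℝ := ∑ j, min (s j) u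

theorem soldVolume_le_soldVolume {s s' : Fin n → ℝ} {x y : ℝ} (hs : s ≤ s') (hxy : x ≤ y) :
    soldVolume s x ≤ soldVolume s' y :=
  Finset.sum_le_sum fun j _ => min_le_min (hs j) hxy

theorem soldVolume_lt_soldVolume {s s' : Fin n → ℝ} {x y : ℝ} (hs : s ≤ s') (hxy : x ≤ y)
    (k : Fin n) (hk : min (s k) x < min (s' k) y) : soldVolume s x < soldVolume s' y :=
  Finset.sum_lt_sum (fun j _ => min_le_min (hs j) hxy) ⟨k, Finset.mem_univ k, hk⟩

theorem soldVolume_mem_Icc {s : Fin n → ℝ} (hs : ∀ j, 0 ≤ s j) {u : ℝ} (hu : 0 ≤ u) :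
    soldVolume s u ∈ Icc 0 (∑ j, s j) :=
  ⟨Finset.sum_nonneg fun j _ => le_min (hs j) hu, Finset.sum_le_sum fun _ _ => min_le_left _ _⟩

theorem continuous_soldVolume (s : Fin n → ℝ) : Continuous (soldVolume s) :=
  continuous_finsetSum _ fun _ _ => continuous_const.min continuous_id

theorem soldVolume_update_of_le (s : Fin n → ℝ) (i : Fin n) {u x y : ℝ} (hx : u ≤ x)
    (hy : u ≤ y) : soldVolume (Function.update s i x) u = soldVolume (Function.update s i y) u := by
  refine Finset.sum_congr rfl fun j _ => ?_
  rcases eq_or_ne j i with rfl | hj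
  · simp only [Function.update_self, min_eq_right hx, min_eq_right hy]
  · simp only [Function.update_of_ne hj]

end SoldVolume

section KKTProfile

variable {n : ℕ} {φ : ℝ → ℝ} {M : ℝ} {L U s s' : Fin n → ℝ}

/-- First-order conditions of a profile `s` in which bank `i` chooses from `[L i, U i]`: `φ` is the
marginal benefit of a sale at the given total volume, to be compared with its marginal cost `1`. -/
def IsKKTProfile (φ : ℝ → ℝ) (L U s : Fin n → ℝ) : Prop :=
  ∀ i, s i ∈ Icc (L i) (U i) ∧ (s i < U i → φ (soldVolume s (s i)) ≤ 1) ∧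
    (L i < s i → 1 ≤ φ (soldVolume s (s i)))

theorem soldVolume_mem_of_mem_Icc (hL : ∀ i, 0 ≤ L i) (hUM : ∑ i, U i ≤ M)
    (hs : ∀ i, s i ∈ Icc (L i) (U i)) {u : ℝ} (hu : 0 ≤ u) : soldVolume s u ∈ Icc 0 M := by
  have hmem := soldVolume_mem_Icc (fun j => (hL j).trans (hs j).1) hu
  exact ⟨hmem.1, hmem.2.trans ((Finset.sum_le_sum fun j _ => (hs j).2).trans hUM)⟩

theorem IsKKTProfile.soldVolume_mem (hs : IsKKTProfile φ L U s) (hL : ∀ i, 0 ≤ L i)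
    (hUM : ∑ i, U i ≤ M) {u : ℝ} (hu : 0 ≤ u) : soldVolume s u ∈ Icc 0 M :=
  soldVolume_mem_of_mem_Icc hL hUM (fun j => (hs j).1) hu

theorem IsKKTProfile.le_of_lt_of_lt (hs : IsKKTProfile φ L U s) (hL : ∀ i, 0 ≤ L i)
    (hUM : ∑ i, U i ≤ M) (hφ : StrictAntiOn φ (Icc 0 M)) {i k : Fin n} (hi : s i < U i)
    (hk : L k < s k) : s k ≤ s i := by
  by_contra! hik
  have hV : soldVolume s (s i) < soldVolume s (s k) :=
    soldVolume_lt_soldVolume le_rfl hik.le k (by rwa [min_self, min_eq_right hik.le])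
  have := hφ (hs.soldVolume_mem hL hUM ((hL i).trans (hs i).1.1))
    (hs.soldVolume_mem hL hUM ((hL k).trans (hs k).1.1)) hV
  linarith [(hs i).2.1 hi, (hs k).2.2 hk]

theorem IsKKTProfile.le_of_lt (hs : IsKKTProfile φ L U s) (hs' : IsKKTProfile φ L U s')
    (hL : ∀ i, 0 ≤ L i) (hUM : ∑ i, U i ≤ M) (hφ : StrictAntiOn φ (Icc 0 M)) {i : Fin n}
    (hi : s' i < s i) : s' ≤ s := by
  intro j
  by_contra! hj
  have hij : s i ≤ s j :=
    hs.le_of_lt_of_lt hL hUM hφ (hj.trans_le (hs' j).1.2) (((hs' i).1.1).trans_lt hi)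
  have hji : s' j ≤ s' i :=
    hs'.le_of_lt_of_lt hL hUM hφ (hi.trans_le (hs i).1.2) (((hs j).1.1).trans_lt hj)
  linarith

theorem IsKKTProfile.le (hs : IsKKTProfile φ L U s) (hs' : IsKKTProfile φ L U s')
    (hL : ∀ i, 0 ≤ L i) (hUM : ∑ i, U i ≤ M) (hφ : StrictAntiOn φ (Icc 0 M)) : s ≤ s' := by
  intro i
  by_contra! hi
  have hV : soldVolume s' (s' i) < soldVolume s (s i) :=
    soldVolume_lt_soldVolume (hs.le_of_lt hs' hL hUM hφ hi) hi.le i (by rwa [min_self, min_self])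
  have := (hφ.le_iff_ge (hs'.soldVolume_mem hL hUM ((hL i).trans (hs' i).1.1))
    (hs.soldVolume_mem hL hUM ((hL i).trans (hs i).1.1))).mp
    (((hs' i).2.1 (hi.trans_le (hs i).1.2)).trans ((hs i).2.2 (((hs' i).1.1).trans_lt hi)))
  linarith

theorem isKKTProfile_clamp (hL : ∀ i, 0 ≤ L i) (hLU : ∀ i, L i ≤ U i) (hUM : ∑ i, U i ≤ M)
    (hφ : AntitoneOn φ (Icc 0 M)) {t : ℝ} (ht : 0 ≤ t) (hge : 1 ≤ φ (soldVolume U t))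
    (hle : φ (soldVolume U t) ≤ 1 ∨ ∀ i, U i ≤ t) :
    IsKKTProfile φ L U fun i => max (L i) (min t (U i)) := by
  set s : Fin n → ℝ := fun i => max (L i) (min t (U i)) with hs
  have hsI : ∀ i, s i ∈ Icc (L i) (U i) := fun i =>
    ⟨le_max_left _ _, max_le (hLU i) (min_le_right _ _)⟩
  have hmem : ∀ u, 0 ≤ u → soldVolume s u ∈ Icc 0 M := fun u hu =>
    soldVolume_mem_of_mem_Icc hL hUM hsI hu
  have hst : soldVolume s t = soldVolume U t := Finset.sum_congr rfl fun j _ => by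
    have := hLU j
    simp only [hs, min_def, max_def]
    split_ifs <;> linarith
  intro i
  refine ⟨hsI i, fun hiU => ?_, fun hLi => ?_⟩
  · have hti : t ≤ s i := by
      rcases le_total t (U i) with htU | hUt
      · exact (min_eq_left htU).symm.le.trans (le_max_right _ _)
      · exact absurd ((min_eq_right hUt).symm.le.trans (le_max_right _ _)) (not_le.mpr hiU)
    have := hφ (hmem t ht) (hmem _ (ht.trans hti)) (soldVolume_le_soldVolume le_rfl hti)
    rw [hst] at this
    rcases hle with hle | htU
    · linarith
    · exact absurd ((htU i).trans hti) (not_le.mpr hiU)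
  · have hit : s i ≤ t := by
      rcases max_choice (L i) (min t (U i)) with h | h
      · exact (hLi.ne' h).elim
      · exact h.le.trans (min_le_left _ _)
    have := hφ (hmem _ ((hL i).trans (hsI i).1)) (hmem t ht) (soldVolume_le_soldVolume le_rfl hit)
    rw [hst] at this
    linarith

theorem exists_threshold (hU : ∀ i, 0 ≤ U i) (hUM : ∑ i, U i ≤ M)
    (hφc : ContinuousOn φ (Icc 0 M)) (hφ0 : 1 ≤ φ 0) :
    ∃ t, 0 ≤ t ∧ 1 ≤ φ (soldVolume U t) ∧ (φ (soldVolume U t) ≤ 1 ∨ ∀ i, U i ≤ t) := by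
  have hM : 0 ≤ M := (Finset.sum_nonneg fun i _ => hU i).trans hUM
  rcases le_or_gt 1 (φ (soldVolume U M)) with hM1 | hM1
  · exact ⟨M, hM, hM1, Or.inr fun i =>
      (Finset.single_le_sum (fun j _ => hU j) (Finset.mem_univ i)).trans hUM⟩
  · have hcont : ContinuousOn (fun t => φ (soldVolume U t)) (Icc 0 M) :=
      hφc.comp (continuous_soldVolume U).continuousOn fun t ht =>
        ⟨(soldVolume_mem_Icc hU ht.1).1, (soldVolume_mem_Icc hU ht.1).2.trans hUM⟩
    have h0 : soldVolume U 0 = 0 := Finset.sum_eq_zero fun j _ => min_eq_right (hU j)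
    obtain ⟨t, ht, hφt⟩ := intermediate_value_Icc' hM hcont ⟨hM1.le, by rwa [h0]⟩
    exact ⟨t, ht.1, hφt.ge, Or.inl hφt.le⟩

theorem existsUnique_isKKTProfile (hL : ∀ i, 0 ≤ L i) (hLU : ∀ i, L i ≤ U i)
    (hUM : ∑ i, U i ≤ M) (hφ : StrictAntiOn φ (Icc 0 M)) (hφc : ContinuousOn φ (Icc 0 M))
    (hφ0 : 1 ≤ φ 0) : ∃! s, IsKKTProfile φ L U s := by
  obtain ⟨t, ht, hge, hle⟩ := exists_threshold (fun i => (hL i).trans (hLU i)) hUM hφc hφ0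
  have hs := isKKTProfile_clamp hL hLU hUM hφ.antitoneOn ht hge hle
  exact ⟨_, hs, fun s' hs' => le_antisymm (hs'.le hs hL hUM hφ) (hs.le hs' hL hUM hφ)⟩

end KKTProfile

section Bank

variable {n : ℕ} {a h : Fin n → ℝ} {r q M : ℝ} {qb : Fin n → ℝ} {f : ℝ → ℝ} {i : Fin n}

/-- While bank `i` sells its first `x ≤ A` units, the volume on the book is the same whether it
stops at `x` or at `A`, so the integrand can be taken independent of `x`. -/
theorem obj_lob_update (s : Fin n → ℝ) {x A : ℝ} (hx : 0 ≤ x) (hxA : x ≤ A) :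
    obj n r h (lob n f) i (Function.update s i x) =
      r * h i + (x - (1 + r) * ∫ u in (0:ℝ)..x, f (soldVolume (Function.update s i A) u)) := by
  have hint : ∫ u in (0:ℝ)..x, f (∑ j, min (Function.update s i x j) u)
      = ∫ u in (0:ℝ)..x, f (soldVolume (Function.update s i A) u) :=
    intervalIntegral.integral_congr fun u hu => by
      rw [uIcc_of_le hx] at hu
      exact congrArg f (soldVolume_update_of_le s i hu.2 (hu.2.trans hxA))
  rcases hx.eq_or_lt with rfl | hx0
  · simp [obj, lob]
  · simp only [obj, lob, Function.update_self, if_neg hx0.ne', hint]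
    field_simp
    ring

theorem obj_le_obj_update_iff (hr : 0 ≤ r) (hfA : AntitoneOn f (Icc 0 M))
    (hfc : ContinuousOn f (Icc 0 M)) (haM : ∑ j, a j ≤ M) {s : Fin n → ℝ} (hs : memD n a s)
    {L U : ℝ} (hL : 0 ≤ L) (hUa : U ≤ a i) (hsi : s i ∈ Icc L U) :
    (∀ x ∈ Icc L U, obj n r h (lob n f) i s ≤ obj n r h (lob n f) i (Function.update s i x)) ↔
      (s i < U → (1 + r) * f (soldVolume s (s i)) ≤ 1) ∧
        (L < s i → 1 ≤ (1 + r) * f (soldVolume s (s i))) := by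
  set g : ℝ → ℝ := fun u => f (soldVolume (Function.update s i U) u)
  have hupd : ∀ j, Function.update s i U j ∈ Icc 0 (a j) := by
    intro j
    rcases eq_or_ne j i with rfl | hj
    · simpa using ⟨hL.trans (hsi.1.trans hsi.2), hUa⟩
    · simpa [hj] using hs j
  have hV : ∀ u ∈ Icc 0 U, soldVolume (Function.update s i U) u ∈ Icc 0 M := fun u hu =>
    soldVolume_mem_of_mem_Icc (L := 0) (fun _ => le_rfl) haM hupd hu.1
  have hg : AntitoneOn g (Icc 0 U) := fun x hx y hy hxy =>
    hfA (hV x hx) (hV y hy) (soldVolume_le_soldVolume le_rfl hxy)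
  have hgc : ContinuousOn g (Icc 0 U) := hfc.comp (continuous_soldVolume _).continuousOn hV
  have hgs : g (s i) = f (soldVolume s (s i)) := by
    simp only [g]
    rw [soldVolume_update_of_le s i hsi.2 le_rfl, Function.update_eq_self]
  have hobj : ∀ x ∈ Icc L U, obj n r h (lob n f) i (Function.update s i x) =
      r * h i + (x - (1 + r) * ∫ u in (0:ℝ)..x, g u) := fun x hx =>
    obj_lob_update s (hL.trans hx.1) hx.2
  have hobj_self := hobj (s i) hsi
  rw [Function.update_eq_self] at hobj_self
  rw [← hgs, ← isMinOn_sub_mul_integral_iff (by linarith) hg hL hsi hgc, isMinOn_iff]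
  exact forall₂_congr fun x hx => by rw [hobj x hx, hobj_self, add_le_add_iff_left]

/-- Bounds of bank `i`'s feasible set in (P2). A bank that cannot cover its shortfall gets both
bounds equal to `a i`, which encodes its forced full liquidation. -/
def lowerBound (a h : Fin n → ℝ) (q : ℝ) (qb : Fin n → ℝ) (i : Fin n) : ℝ :=
  if h i ≤ a i * qb i then max 0 ((h i - a i * q) / (qb i - q)) else a i

def upperBound (a h qb : Fin n → ℝ) (i : Fin n) : ℝ :=
  if h i ≤ a i * qb i then min (a i) (h i / qb i) else a i

theorem feasP2_iff (hfe : h i ≤ a i * qb i) {x : ℝ} :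
    feasP2 n a h q qb i x ↔ x ∈ Icc (lowerBound a h q qb i) (upperBound a h qb i) := by
  simp only [feasP2, lowerBound, upperBound, if_pos hfe, mem_Icc, max_le_iff, le_min_iff]
  tauto

theorem lowerBound_nonneg (ha : 0 ≤ a i) : 0 ≤ lowerBound a h q qb i := by
  unfold lowerBound
  split_ifs
  exacts [le_max_left _ _, ha]

theorem upperBound_le : upperBound a h qb i ≤ a i := by
  unfold upperBound
  split_ifs
  exacts [min_le_left _ _, le_rfl]

theorem lowerBound_le_upperBound (ha : 0 ≤ a i) (hh : 0 ≤ h i) (hq : 0 ≤ q) (hqb : 0 < qb i)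
    (hlt : q < qb i) : lowerBound a h q qb i ≤ upperBound a h qb i := by
  unfold lowerBound upperBound
  split_ifs with hfe
  · have hd : 0 < qb i - q := sub_pos.mpr hlt
    refine max_le (le_min ha (div_nonneg hh hqb.le)) (le_min ?_ ?_)
    · rw [div_le_iff₀ hd]
      nlinarith
    · rw [div_le_div_iff₀ hd hqb]
      nlinarith [mul_le_mul_of_nonneg_left hfe hq]
  · exact le_rfl

theorem nashP2_iff_isKKTProfile (hr : 0 ≤ r) (hfA : AntitoneOn f (Icc 0 M))
    (hfc : ContinuousOn f (Icc 0 M)) (haM : ∑ j, a j ≤ M) (ha : ∀ i, 0 ≤ a i)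
    {s : Fin n → ℝ} (hs : memD n a s) :
    NashP2 n a h r q qb (lob n f) s ↔
      IsKKTProfile (fun v => (1 + r) * f v) (lowerBound a h q qb) (upperBound a h qb) s := by
  refine forall_congr' fun i => ?_
  by_cases hfe : h i ≤ a i * qb i
  · simp only [hfe, not_lt.mpr hfe, true_implies, false_implies, and_true, feasP2_iff hfe]
    exact and_congr_right fun hsi =>
      obj_le_obj_update_iff hr hfA hfc haM hs (lowerBound_nonneg (ha i)) upperBound_le hsi
  · simp only [lowerBound, upperBound, hfe, if_false, false_implies, true_and, not_le.mp hfe,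
      true_implies, Icc_self, mem_singleton_iff]
    constructor
    · intro hsi
      simp [hsi]
    · exact fun hsi => hsi.1

theorem memD_and_nashP2_iff_isKKTProfile (hr : 0 ≤ r) (hfA : AntitoneOn f (Icc 0 M))
    (hfc : ContinuousOn f (Icc 0 M)) (haM : ∑ j, a j ≤ M) (ha : ∀ i, 0 ≤ a i)
    {s : Fin n → ℝ} :
    memD n a s ∧ NashP2 n a h r q qb (lob n f) s ↔
      IsKKTProfile (fun v => (1 + r) * f v) (lowerBound a h q qb) (upperBound a h qb) s := by
  refine ⟨fun ⟨hsD, hsN⟩ => (nashP2_iff_isKKTProfile hr hfA hfc haM ha hsD).mp hsN, fun hs => ?_⟩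
  have hsD : memD n a s := fun i =>
    ⟨(lowerBound_nonneg (ha i)).trans (hs i).1.1, (hs i).1.2.trans upperBound_le⟩
  exact ⟨hsD, (nashP2_iff_isKKTProfile hr hfA hfc haM ha hsD).mpr hs⟩

end Bank

/-- under LOB pricing and Assumption 2, for every fixed price vector
`(q, q̄) ∈ Q̂` there exists a unique Nash equilibrium liquidation vector in `D`. -/
theorem lob_unique_equilibrium_at_fixed_prices
    (n : ℕ) (a h : Fin n → ℝ) (r M : ℝ) (f : ℝ → ℝ)
    (ha : ∀ i, 0 < a i) (hh : ∀ i, 0 < h i) (hr : 0 ≤ r)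
    (hM : ∑ i, a i ≤ M)
    (hf : Assumption2 M f)
    (q : ℝ) (qb : Fin n → ℝ)
    (hq : q ∈ Set.Ioc (0 : ℝ) 1) (hqb : ∀ i, qb i ∈ Set.Ioc (0 : ℝ) 1)
    (hlt : ∀ i, q < qb i) :
    ∃! s : Fin n → ℝ, memD n a s ∧ NashP2 n a h r q qb (lob n f) s := by
  have hφ : StrictAntiOn (fun v => (1 + r) * f v) (Icc 0 M) := fun x hx y hy hxy =>
    mul_lt_mul_of_pos_left (hf.anti hx hy hxy) (by linarith)
  have hφc : ContinuousOn (fun v => (1 + r) * f v) (Icc 0 M) :=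
    continuousOn_const.mul hf.smooth.continuousOn
  have hφ0 : 1 ≤ (1 + r) * f 0 := by
    rw [hf.f_zero]
    linarith
  have hL : ∀ i, 0 ≤ lowerBound a h q qb i := fun i => lowerBound_nonneg (ha i).le
  have hLU : ∀ i, lowerBound a h q qb i ≤ upperBound a h qb i := fun i =>
    lowerBound_le_upperBound (ha i).le (hh i).le hq.1.le (hqb i).1 (hlt i)
  have hUM : ∑ i, upperBound a h qb i ≤ M :=
    (Finset.sum_le_sum fun i _ => upperBound_le).trans hM
  refine (existsUnique_congr fun s => memD_and_nashP2_iff_isKKTProfile hr hf.anti.antitoneOn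
    hf.smooth.continuousOn hM fun i => (ha i).le).mpr ?_
  exact existsUnique_isKKTProfile hL hLU hUM hφ hφc hφ0
end
end

section
/- In the symmetric LOB setting, for any fixed prices (q, q̄) with 0 ≤ q < q̄ ≤ 1 and h < a·q̄, the unique Nash equilibrium of problem (P2) (with all banks facing the same price q̄) is symmetric, s_i = s^LOB(q,q̄) for all i, where s^LOB(q,q̄) = max( (h − a q)/(q̄ − q) , min( r/(α(1+r)n) , h/q̄ ) ). -/
noncomputable section

/-!
With the other banks' liquidations `s` fixed, bank `i`'s cost of liquidating `x` is
`r h - r x + (1 + r) α ∫₀ˣ V(u) du`, where `V(u) = u + ∑_{j ≠ i} min (s j) u` is the volume already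
sold when bank `i` has sold `u`. As `V` is increasing, the cost is convex with marginal cost
`(1 + r) α V(x) - r`. Since `V(u) ≤ n u`, with equality when every bank liquidates at least `u`, the
symmetric profile at `s^LOB`, the projection of `r / ((1 + r) α n)` onto the feasible interval,
satisfies the first-order conditions. Conversely, a bank liquidating less than `s^LOB` would gain by
selling slightly more, as its marginal cost at `y < s^LOB` is at most `(1 + r) α n y - r < 0`; once
every bank liquidates at least `s^LOB`, a bank liquidating more would gain by selling slightly less,
as there `V(y) ≥ y + (n - 1) s^LOB > n s^LOB`.
-/

open Finset Set

section MonotoneIntegral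

variable {G : ℝ → ℝ} {x y : ℝ}

lemma Monotone.sub_mul_le_intervalIntegral (hG : Monotone G) (hxy : x ≤ y) :
    (y - x) * G x ≤ ∫ u in x..y, G u := by
  calc (y - x) * G x = ∫ _ in x..y, G x := by simp
    _ ≤ ∫ u in x..y, G u :=
      intervalIntegral.integral_mono_on hxy intervalIntegrable_const hG.intervalIntegrable
        fun _ hu => hG hu.1

lemma Monotone.intervalIntegral_le_sub_mul (hG : Monotone G) (hxy : x ≤ y) :
    ∫ u in x..y, G u ≤ (y - x) * G y := by
  calc ∫ u in x..y, G u ≤ ∫ _ in x..y, G y :=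
      intervalIntegral.integral_mono_on hxy hG.intervalIntegrable intervalIntegrable_const
        fun _ hu => hG hu.2
    _ = (y - x) * G y := by simp

end MonotoneIntegral

/-- The change in cost `C(y) - C(x)` for a cost `C` with marginal cost `c * G - r`. -/
def costChange (r c : ℝ) (G : ℝ → ℝ) (x y : ℝ) : ℝ :=
  c * (∫ u in x..y, G u) - r * (y - x)

section CostChange

variable {r c : ℝ} {G : ℝ → ℝ} {x y : ℝ}

@[simp]
lemma costChange_self : costChange r c G x x = 0 := by
  simp [costChange]

lemma costChange_nonneg_of_le_mul (hG : Monotone G) (hc : 0 ≤ c) (hxy : x ≤ y)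
    (hx : r ≤ c * G x) : 0 ≤ costChange r c G x y := by
  have := mul_le_mul_of_nonneg_left (hG.sub_mul_le_intervalIntegral hxy) hc
  simp only [costChange]
  linarith [mul_nonneg (sub_nonneg.2 hx) (sub_nonneg.2 hxy)]

lemma costChange_nonneg_of_mul_le (hG : Monotone G) (hc : 0 ≤ c) (hyx : y ≤ x)
    (hx : c * G x ≤ r) : 0 ≤ costChange r c G x y := by
  have := mul_le_mul_of_nonneg_left (hG.intervalIntegral_le_sub_mul hyx) hc
  simp only [costChange]
  rw [intervalIntegral.integral_symm]
  linarith [mul_nonneg (sub_nonneg.2 hx) (sub_nonneg.2 hyx)]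

lemma le_mul_of_costChange_nonneg (hG : Monotone G) (hc : 0 ≤ c) (hxy : x < y)
    (h : 0 ≤ costChange r c G x y) : r ≤ c * G y := by
  have := mul_le_mul_of_nonneg_left (hG.intervalIntegral_le_sub_mul hxy.le) hc
  simp only [costChange] at h
  by_contra! hlt
  linarith [mul_pos (sub_pos.2 hlt) (sub_pos.2 hxy)]

lemma mul_le_of_costChange_nonneg (hG : Monotone G) (hc : 0 ≤ c) (hyx : y < x)
    (h : 0 ≤ costChange r c G x y) : c * G y ≤ r := by
  have := mul_le_mul_of_nonneg_left (hG.sub_mul_le_intervalIntegral hyx.le) hc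
  simp only [costChange] at h
  rw [intervalIntegral.integral_symm] at h
  by_contra! hlt
  linarith [mul_pos (sub_pos.2 hlt) (sub_pos.2 hyx)]

end CostChange

/-- The total volume sold when bank `i` has sold `u`, all banks selling at the same rate. -/
def lobVolume {n : ℕ} (s : Fin n → ℝ) (i : Fin n) (u : ℝ) : ℝ :=
  u + ∑ j ∈ univ.erase i, min (s j) u

section LobVolume

variable {n : ℕ} (s : Fin n → ℝ) (i : Fin n)

lemma monotone_lobVolume : Monotone (lobVolume s i) := fun _ _ huv =>
  add_le_add huv (sum_le_sum fun _ _ => min_le_min le_rfl huv)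

lemma sum_univ_erase_const (b : ℝ) : ∑ _j ∈ univ.erase i, b = (n - 1) * b := by
  rw [sum_erase_eq_sub (mem_univ i)]
  simp only [sum_const, card_univ, Fintype.card_fin, nsmul_eq_mul]
  ring

lemma lobVolume_le (u : ℝ) : lobVolume s i u ≤ n * u := by
  have : ∑ j ∈ univ.erase i, min (s j) u ≤ (n - 1) * u :=
    sum_univ_erase_const i u ▸ sum_le_sum fun _ _ => min_le_right _ _
  unfold lobVolume
  linarith

lemma add_mul_le_lobVolume {v u : ℝ} (hs : ∀ j, v ≤ s j) (hvu : v ≤ u) :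
    u + (n - 1) * v ≤ lobVolume s i u := by
  have : (n - 1) * v ≤ ∑ j ∈ univ.erase i, min (s j) u :=
    sum_univ_erase_const i v ▸ sum_le_sum fun j _ => le_min (hs j) hvu
  unfold lobVolume
  linarith

lemma lobVolume_eq_of_forall_le {u : ℝ} (hs : ∀ j, u ≤ s j) : lobVolume s i u = n * u :=
  le_antisymm (lobVolume_le s i u) (by linarith [add_mul_le_lobVolume s i hs le_rfl])

lemma sum_min_update_eq_lobVolume {x u : ℝ} (hux : u ≤ x) :
    ∑ j, min (Function.update s i x j) u = lobVolume s i u := by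
  rw [← add_sum_erase _ _ (mem_univ i), Function.update_self, min_eq_right hux]
  congr 1
  refine sum_congr rfl fun j hj => ?_
  rw [Function.update_of_ne (ne_of_mem_erase hj)]

lemma mul_lob_update (f : ℝ → ℝ) {x : ℝ} (hx : 0 ≤ x) :
    x * lob n f i (Function.update s i x) = ∫ u in (0:ℝ)..x, f (lobVolume s i u) := by
  unfold lob
  rw [Function.update_self]
  rcases hx.eq_or_lt with rfl | hx
  · simp
  rw [if_neg hx.ne', mul_div_cancel₀ _ hx.ne']
  refine intervalIntegral.integral_congr fun u hu => ?_
  rw [uIcc_of_le hx.le] at hu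
  simp only [sum_min_update_eq_lobVolume s i hu.2]

lemma obj_update_lob_linear (r α : ℝ) (h : Fin n → ℝ) {x : ℝ} (hx : 0 ≤ x) :
    obj n r h (lob n fun t => 1 - α * t) i (Function.update s i x)
      = r * h i - r * x + (1 + r) * α * ∫ u in (0:ℝ)..x, lobVolume s i u := by
  have hlob := mul_lob_update s i (fun t => 1 - α * t) hx
  rw [intervalIntegral.integral_sub intervalIntegrable_const
      ((monotone_lobVolume s i).intervalIntegrable.const_mul α),
    intervalIntegral.integral_const_mul, intervalIntegral.integral_const, smul_eq_mul,
    sub_zero, mul_one] at hlob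
  unfold obj
  rw [Function.update_self]
  linear_combination (-1 - r) * hlob

lemma obj_update_sub_obj_update (r α : ℝ) (h : Fin n → ℝ) {x y : ℝ} (hx : 0 ≤ x) (hy : 0 ≤ y) :
    obj n r h (lob n fun t => 1 - α * t) i (Function.update s i y)
      - obj n r h (lob n fun t => 1 - α * t) i (Function.update s i x)
      = costChange r ((1 + r) * α) (lobVolume s i) x y := by
  have hsplit : (∫ u in (0:ℝ)..y, lobVolume s i u) - ∫ u in (0:ℝ)..x, lobVolume s i u
      = ∫ u in x..y, lobVolume s i u :=
    intervalIntegral.integral_interval_sub_left (monotone_lobVolume s i).intervalIntegrable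
      (monotone_lobVolume s i).intervalIntegrable
  rw [obj_update_lob_linear s i r α h hx, obj_update_lob_linear s i r α h hy, costChange]
  linear_combination (1 + r) * α * hsplit

end LobVolume

lemma optimality_of_eq_max_min {k r lo x hi v : ℝ} (hk : 0 ≤ k) (hx : k * x = r)
    (hlohi : lo ≤ hi) (hv : v = max lo (min x hi)) :
    v ∈ Icc lo hi ∧ (v < hi → r ≤ k * v) ∧ (lo < v → k * v ≤ r) := by
  subst hx hv
  refine ⟨⟨le_max_left _ _, max_le hlohi (min_le_right _ _)⟩, fun hv => ?_, fun hv => ?_⟩ <;>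
    exact mul_le_mul_of_nonneg_left (by grind) hk

/-- Nash equilibrium of the liquidation game with action set `[lo, hi]` in which bank `i`'s
marginal cost is `c * lobVolume s i - r` (cf. `obj_update_sub_obj_update`). -/
def IsLOBEquilibrium {n : ℕ} (r c lo hi : ℝ) (s : Fin n → ℝ) : Prop :=
  ∀ i, s i ∈ Icc lo hi ∧ ∀ y ∈ Icc lo hi, 0 ≤ costChange r c (lobVolume s i) (s i) y

section Equilibrium

variable {n : ℕ} {r c lo hi v : ℝ}

lemma isLOBEquilibrium_const (hc : 0 ≤ c) (hv : v ∈ Icc lo hi)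
    (hup : v < hi → r ≤ c * n * v) (hdown : lo < v → c * n * v ≤ r) :
    IsLOBEquilibrium r c lo hi (fun _ : Fin n => v) := by
  intro i
  refine ⟨hv, fun y hy => ?_⟩
  have hV : c * lobVolume (fun _ => v) i v = c * n * v := by
    rw [lobVolume_eq_of_forall_le _ i fun _ => le_rfl, mul_assoc]
  rcases lt_trichotomy y v with hyv | rfl | hvy
  · exact costChange_nonneg_of_mul_le (monotone_lobVolume _ i) hc hyv.le
      (hV ▸ hdown (hy.1.trans_lt hyv))
  · simp
  · exact costChange_nonneg_of_le_mul (monotone_lobVolume _ i) hc hvy.le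
      (hV ▸ hup (hvy.trans_le hy.2))

lemma IsLOBEquilibrium.eq_const {s : Fin n → ℝ} (hs : IsLOBEquilibrium r c lo hi s)
    (hc : 0 < c) (hv : v ∈ Icc lo hi)
    (hup : v < hi → r ≤ c * n * v) (hdown : lo < v → c * n * v ≤ r) :
    s = fun _ => v := by
  have hge : ∀ i, v ≤ s i := by
    intro i
    by_contra! hlt
    obtain ⟨⟨hlo, -⟩, hopt⟩ := hs i
    have hn : (0 : ℝ) < n := Nat.cast_pos.2 i.pos
    obtain ⟨y, hiy, hyv⟩ := exists_between hlt
    have hmarg := le_mul_of_costChange_nonneg (monotone_lobVolume s i) hc.le hiy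
      (hopt y ⟨hlo.trans hiy.le, hyv.le.trans hv.2⟩)
    have hsmall : c * lobVolume s i y < c * n * v := mul_assoc c n v ▸
      mul_lt_mul_of_pos_left ((lobVolume_le s i y).trans_lt (mul_lt_mul_of_pos_left hyv hn)) hc
    linarith [hdown (hlo.trans_lt hlt)]
  funext i
  refine le_antisymm ?_ (hge i)
  by_contra! hlt
  obtain ⟨⟨-, hhi⟩, hopt⟩ := hs i
  obtain ⟨y, hvy, hyi⟩ := exists_between hlt
  have hmarg := mul_le_of_costChange_nonneg (monotone_lobVolume s i) hc.le hyi
    (hopt y ⟨hv.1.trans hvy.le, hyi.le.trans hhi⟩)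
  have hlarge : c * n * v < c * lobVolume s i y := mul_assoc c n v ▸
    mul_lt_mul_of_pos_left (by linarith [add_mul_le_lobVolume s i hge hvy.le]) hc
  linarith [hup (hlt.trans_le hhi)]

end Equilibrium

lemma feasP2_const_iff {n : ℕ} {a h q qb y : ℝ} (i : Fin n) (hU : h / qb ≤ a) :
    feasP2 n (fun _ => a) (fun _ => h) q (fun _ => qb) i y
      ↔ y ∈ Icc (max 0 ((h - a * q) / (qb - q))) (h / qb) := by
  simp only [feasP2, Set.mem_Icc, max_le_iff]
  constructor
  · rintro ⟨⟨hy0, -⟩, hyU, hyL⟩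
    exact ⟨⟨hy0, hyL⟩, hyU⟩
  · rintro ⟨⟨hy0, hyL⟩, hyU⟩
    exact ⟨⟨hy0, hyU.trans hU⟩, hyU, hyL⟩

lemma nashP2_lob_iff {n : ℕ} {a h r α q qb : ℝ} {s : Fin n → ℝ} (hsolv : h ≤ a * qb)
    (hU : h / qb ≤ a) :
    NashP2 n (fun _ => a) (fun _ => h) r q (fun _ => qb) (lob n fun t => 1 - α * t) s
      ↔ IsLOBEquilibrium r ((1 + r) * α) (max 0 ((h - a * q) / (qb - q))) (h / qb) s := by
  refine forall_congr' fun i => ?_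
  simp only [feasP2_const_iff i hU, hsolv, not_lt.2 hsolv, true_implies, false_implies, and_true]
  refine and_congr_right fun hsi => forall₂_congr fun y hy => ?_
  have hchange := obj_update_sub_obj_update s i r α (fun _ => h)
    ((le_max_left _ _).trans hsi.1) ((le_max_left _ _).trans hy.1)
  rw [Function.update_eq_self] at hchange
  rw [← sub_nonneg, hchange]

theorem symmetric_lob_equilibrium_general
    (n : ℕ) (hn : 2 ≤ n) (a h r α : ℝ)
    (ha : 0 < a) (hh : 0 < h)
    (hr : r ∈ Set.Ioo (0 : ℝ) (1/3))
    (hα : α ∈ Set.Ioo (2*r / ((1+r) * ((n : ℝ)+1) * a)) (1 / (2*(n : ℝ)*a)))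
    (q qb : ℝ) (hq : 0 ≤ q) (hlt : q < qb)
    (hsolv : h < a * qb)
    (sv : ℝ)
    (hsv : sv = max ((h - a*q) / (qb - q))
        (min (r / (α*(1+r)*(n : ℝ))) (h/qb))) :
    (memD n (fun _ => a) (fun _ => sv) ∧
      NashP2 n (fun _ => a) (fun _ => h) r q (fun _ => qb)
        (lob n (fun x => 1 - α * x)) (fun _ => sv)) ∧
    ∀ s : Fin n → ℝ, memD n (fun _ => a) s →
      NashP2 n (fun _ => a) (fun _ => h) r q (fun _ => qb)
        (lob n (fun x => 1 - α * x)) s →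
      s = fun _ => sv := by
  obtain ⟨hr0, -⟩ := hr
  have hqb0 : 0 < qb := hq.trans_lt hlt
  have hα0 : 0 < α := lt_of_le_of_lt (by positivity) hα.1
  have hn0 : (0 : ℝ) < n := by exact_mod_cast (by omega : 0 < n)
  have hU : h / qb < a := (div_lt_iff₀ hqb0).2 hsolv
  have hLU : (h - a * q) / (qb - q) ≤ h / qb := by
    rw [div_le_div_iff₀ (by linarith) hqb0]
    nlinarith [mul_le_mul_of_nonneg_left hsolv.le hq]
  have hx : (1 + r) * α * n * (r / (α * (1 + r) * n)) = r := by field_simp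
  have hsv' :
      sv = max (max 0 ((h - a * q) / (qb - q))) (min (r / (α * (1 + r) * n)) (h / qb)) := by
    have hmin : 0 ≤ min (r / (α * (1 + r) * n)) (h / qb) := by positivity
    rw [hsv, max_comm 0, max_assoc, max_eq_right hmin]
  obtain ⟨hv, hup, hdown⟩ :=
    optimality_of_eq_max_min (by positivity) hx (max_le (by positivity) hLU) hsv'
  simp only [nashP2_lob_iff hsolv.le hU.le]
  refine ⟨⟨fun _ => ⟨(le_max_left _ _).trans hv.1, hv.2.trans hU.le⟩,
    isLOBEquilibrium_const (by positivity) hv hup hdown⟩,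
    fun s _ hs => hs.eq_const (by positivity) hv hup hdown⟩

/-- in the symmetric LOB setting with order book density `f(s) = 1 − αs`,
for any fixed prices `0 ≤ q < q̄ ≤ 1` with `h < a·q̄`, the unique Nash equilibrium of (P2)
is symmetric, with every bank liquidating
`s^LOB(q,q̄) = max((h − aq)/(q̄ − q), min(r/(α(1+r)n), h/q̄))`. -/
theorem symmetric_lob_equilibrium
    (n : ℕ) (hn : 2 ≤ n) (a h r α : ℝ)
    (ha : 0 < a) (hh : 0 < h)
    (hr : r ∈ Set.Ioo (0 : ℝ) (1/3))
    (hα : α ∈ Set.Ioo (2*r / ((1+r) * ((n : ℝ)+1) * a)) (1 / (2*(n : ℝ)*a)))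
    (q qb : ℝ) (hq : 0 ≤ q) (hlt : q < qb) (hqb : qb ≤ 1)
    (hsolv : h < a * qb)
    (sv : ℝ)
    (hsv : sv = max ((h - a*q) / (qb - q))
        (min (r / (α*(1+r)*(n : ℝ))) (h/qb))) :
    (memD n (fun _ => a) (fun _ => sv) ∧
      NashP2 n (fun _ => a) (fun _ => h) r q (fun _ => qb)
        (lob n (fun x => 1 - α * x)) (fun _ => sv)) ∧
    ∀ s : Fin n → ℝ, memD n (fun _ => a) s →
      NashP2 n (fun _ => a) (fun _ => h) r q (fun _ => qb)
        (lob n (fun x => 1 - α * x)) s →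
      s = fun _ => sv :=
  symmetric_lob_equilibrium_general n hn a h r α ha hh hr hα q qb hq hlt hsolv sv hsv
end
end
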